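/- Let [B,i,j] be a framed representation on V¹ and [B',i',j'] a framed representation on V², and assume dim V¹_i = dim V²_i for all i ∈ I. If [B,i,j] is stable and ξ ∈ L(V¹,V²) satisfies B'_h∘ξ_{s(h)} = ξ_{t(h)}∘B_h for all h ∈ H, ξ_i∘i_i = i'_i for all i ∈ I, and j'_i∘ξ_i = j_i for all i ∈ I, then every component ξ_i is a linear isomorphism. -/
import Mathlib


noncomputable section

open Module

/-- A homomorphism of framed representations from a stable framed
representation to one with the same dimension vector has bijective components. -/
theorem stmt3
    {I H : Type} [Fintype I] [Fintype H]
    (s t : H → I) (bar : H → H)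
    (bar_invol : ∀ h, bar (bar h) = h) (bar_ne : ∀ h, bar h ≠ h)
    (s_bar : ∀ h, s (bar h) = t h) (t_bar : ∀ h, t (bar h) = s h)
    (eps : H → ℤ) (eps_pm : ∀ h, eps h = 1 ∨ eps h = -1)
    (eps_bar : ∀ h, eps (bar h) = - eps h)
    (V1 V2 W : I → Type)
    [∀ i, AddCommGroup (V1 i)] [∀ i, Module ℂ (V1 i)] [∀ i, FiniteDimensional ℂ (V1 i)]
    [∀ i, AddCommGroup (V2 i)] [∀ i, Module ℂ (V2 i)] [∀ i, FiniteDimensional ℂ (V2 i)]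
    [∀ i, AddCommGroup (W i)] [∀ i, Module ℂ (W i)] [∀ i, FiniteDimensional ℂ (W i)]
    (hdim : ∀ i, finrank ℂ (V1 i) = finrank ℂ (V2 i))
    (B : ∀ h, V1 (s h) →ₗ[ℂ] V1 (t h)) (iV : ∀ i, W i →ₗ[ℂ] V1 i) (jV : ∀ i, V1 i →ₗ[ℂ] W i)
    (B' : ∀ h, V2 (s h) →ₗ[ℂ] V2 (t h)) (iV' : ∀ i, W i →ₗ[ℂ] V2 i) (jV' : ∀ i, V2 i →ₗ[ℂ] W i)
    -- stability of [B, iV, jV]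
    (hstab : ∀ S : ∀ i, Submodule ℂ (V1 i),
      (∀ h, (S (s h)).map (B h) ≤ S (t h)) →
      (∀ i, S i ≤ LinearMap.ker (jV i)) →
      ∀ i, S i = ⊥)
    (ξ : ∀ i, V1 i →ₗ[ℂ] V2 i)
    (hB : ∀ h, B' h ∘ₗ ξ (s h) = ξ (t h) ∘ₗ B h)
    (hi : ∀ i, ξ i ∘ₗ iV i = iV' i)
    (hj : ∀ i, jV' i ∘ₗ ξ i = jV i) :
    ∀ i, Function.Bijective (ξ i) := by
  have hker : ∀ i, LinearMap.ker (ξ i) = ⊥ := by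
    apply hstab
    · intro h
      rintro x ⟨y, hy, rfl⟩
      have := congrArg (fun f => f y) (hB h)
      simp only [LinearMap.comp_apply, LinearMap.mem_ker.mp hy, map_zero] at this
      exact LinearMap.mem_ker.mpr this.symm
    · intro i x hx
      have := congrArg (fun f => f x) (hj i)
      simp only [LinearMap.comp_apply, LinearMap.mem_ker.mp hx, map_zero] at this
      exact LinearMap.mem_ker.mpr this.symm
  intro i
  have hinj : Function.Injective (ξ i) := by
    rw [← LinearMap.ker_eq_bot]; exact hker i
  exact ⟨hinj, (LinearMap.injective_iff_surjective_of_finrank_eq_finrank (hdim i)).mp hinj⟩
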